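/- arXiv:math/9906106 — 2 statements merged into one kernel-verified Lean document; each statement's English description precedes it below -/
import Mathlib

section
/- Let a : ℝⁿ \ {0} → A be a continuous map into a unital C*-algebra A such that each a(ξ) is self-adjoint and invertible, and a is homogeneous of degree m ≥ 1, i.e., a(tξ) = tᵐ a(ξ) for all t > 0. Then the function ξ ↦ ‖(a(ξ) + i·1)⁻¹‖ tends to 0 as ‖ξ‖ → ∞. -/
open Complex Filter Topology

/-!
For self-adjoint invertible `b`, the spectrum of `b` is real and avoids `-i`, so by the
continuous functional calculus `‖(b + i)⁻¹‖ ≤ sup_{z ∈ σ(b)} |z + i|⁻¹ ≤ sup_{z ∈ σ(b)} |z|⁻¹ ≤ ‖b⁻¹‖`.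
By homogeneity `a(ξ)⁻¹ = ‖ξ‖⁻ᵐ a(ξ/‖ξ‖)⁻¹`, and `ξ ↦ a(ξ)⁻¹` is bounded on the compact unit
sphere, so `‖(a(ξ) + i)⁻¹‖ ≤ C ‖ξ‖⁻ᵐ`.
-/

theorem Ring.inverse_smul {𝕜 A : Type*} [Field 𝕜] [Ring A] [Module 𝕜 A] [IsScalarTower 𝕜 A A]
    [SMulCommClass 𝕜 A A] {c : 𝕜} (hc : c ≠ 0) {x : A} (hx : IsUnit x) :
    Ring.inverse (c • x) = c⁻¹ • Ring.inverse x := by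
  obtain ⟨u, rfl⟩ := hx
  let v : Aˣ := ⟨c • ↑u, c⁻¹ • ↑u⁻¹, by simp [smul_mul_smul_comm, hc], by
    simp [smul_mul_smul_comm, hc]⟩
  exact (Ring.inverse_unit v).trans (by rw [Ring.inverse_unit]; rfl)

theorem spectrum.norm_inv_le_norm_inverse {𝕜 A : Type*} [NormedField 𝕜] [NormedRing A]
    [NormedAlgebra 𝕜 A] [CompleteSpace A] [NormOneClass A] {a : A} (ha : IsUnit a) {k : 𝕜}
    (hk : k ∈ spectrum 𝕜 a) : ‖k‖⁻¹ ≤ ‖Ring.inverse a‖ := by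
  obtain ⟨u, rfl⟩ := ha
  have hk0 : k ≠ 0 := fun h => spectrum.zero_notMem 𝕜 u.isUnit (h ▸ hk)
  rw [Ring.inverse_unit, ← norm_inv]
  exact spectrum.norm_le_norm_of_mem ((spectrum.inv_mem_iff (r := Units.mk0 k hk0)).1 hk)

theorem IsSelfAdjoint.norm_inverse_add_I_smul_one_le {A : Type*} [CStarAlgebra A] {b : A}
    (hb : IsSelfAdjoint b) (hunit : IsUnit b) :
    ‖Ring.inverse (b + I • (1 : A))‖ ≤ ‖Ring.inverse b‖ := by
  nontriviality A
  have := hb.isStarNormal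
  have hne : ∀ z ∈ spectrum ℂ b, z + I ≠ 0 := fun z hz h => by
    simpa [hb.im_eq_zero_of_mem_spectrum hz] using congrArg Complex.im h
  have hcfc : Ring.inverse (b + I • (1 : A)) = cfc (fun z : ℂ => (z + I)⁻¹) b := by
    rw [cfc_inv (fun z : ℂ => z + I) b hne, cfc_add_const I (fun z : ℂ => z) b, cfc_id' ℂ b,
      Algebra.algebraMap_eq_smul_one]
  rw [hcfc]
  refine norm_cfc_le (norm_nonneg _) fun z hz => ?_
  have hz0 : 0 < ‖z‖ := norm_pos_iff.2 fun h => spectrum.zero_notMem ℂ hunit (h ▸ hz)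
  have hle : ‖z‖ ≤ ‖z + I‖ := by
    calc ‖z‖ = |(z + I).re| := by
          rw [add_re, I_re, add_zero, abs_re_eq_norm.2 (hb.im_eq_zero_of_mem_spectrum hz)]
      _ ≤ ‖z + I‖ := abs_re_le_norm _
  rw [norm_inv]
  exact (inv_anti₀ hz0 hle).trans (spectrum.norm_inv_le_norm_inverse hunit hz)

theorem exists_norm_inverse_le_div_norm_pow {E A : Type*} [NormedAddCommGroup E]
    [NormedSpace ℝ E] [ProperSpace E] [NormedRing A] [NormedSpace ℝ A] [IsScalarTower ℝ A A]
    [SMulCommClass ℝ A A] [CompleteSpace A] {f : E → A} (hcont : ContinuousOn f {ξ | ξ ≠ 0})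
    (hunit : ∀ ξ, ξ ≠ 0 → IsUnit (f ξ)) {m : ℕ}
    (hhom : ∀ t : ℝ, 0 < t → ∀ ξ, ξ ≠ 0 → f (t • ξ) = (t ^ m : ℝ) • f ξ) :
    ∃ C, ∀ ξ, ξ ≠ 0 → ‖Ring.inverse (f ξ)‖ ≤ C / ‖ξ‖ ^ m := by
  have hsphere : Metric.sphere (0 : E) 1 ⊆ {ξ | ξ ≠ 0} := fun η hη h => by simp_all
  have hcont_inv : ContinuousOn (fun η => Ring.inverse (f η)) (Metric.sphere 0 1) := by
    intro η hη
    have hinv_cont : ContinuousAt Ring.inverse (f η) := by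
      simpa using NormedRing.inverse_continuousAt (hunit η (hsphere hη)).unit
    exact hinv_cont.comp_continuousWithinAt ((hcont η (hsphere hη)).mono hsphere)
  obtain ⟨C, hC⟩ := (isCompact_sphere (0 : E) 1).exists_bound_of_continuousOn hcont_inv
  refine ⟨C, fun ξ hξ => ?_⟩
  have hr : 0 < ‖ξ‖ := norm_pos_iff.2 hξ
  set η := ‖ξ‖⁻¹ • ξ
  have hη : η ∈ Metric.sphere (0 : E) 1 := by simp [η, norm_smul, hr.ne']
  have hfξ : f ξ = (‖ξ‖ ^ m : ℝ) • f η := by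
    rw [← hhom _ hr _ (hsphere hη), smul_inv_smul₀ hr.ne']
  rw [hfξ, Ring.inverse_smul (pow_pos hr m).ne' (hunit η (hsphere hη)), norm_smul, norm_inv,
    norm_pow, Real.norm_of_nonneg hr.le, div_eq_inv_mul]
  gcongr
  exact hC η hη

/-- If `a : ℝⁿ \ {0} → A` is continuous, takes self-adjoint invertible values, and is
homogeneous of degree `m ≥ 1`, then `‖(a(ξ) + i)⁻¹‖ → 0` as `‖ξ‖ → ∞`. -/
theorem stmt12 {A : Type*} [CStarAlgebra A] {n : ℕ}
    (a : EuclideanSpace ℝ (Fin n) → A)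
    (hcont : ContinuousOn a {ξ : EuclideanSpace ℝ (Fin n) | ξ ≠ 0})
    (hsa : ∀ ξ : EuclideanSpace ℝ (Fin n), ξ ≠ 0 → IsSelfAdjoint (a ξ))
    (hinv : ∀ ξ : EuclideanSpace ℝ (Fin n), ξ ≠ 0 → IsUnit (a ξ))
    (m : ℕ) (hm : 1 ≤ m)
    (hhom : ∀ t : ℝ, 0 < t → ∀ ξ : EuclideanSpace ℝ (Fin n), ξ ≠ 0 →
      a (t • ξ) = (t ^ m : ℝ) • a ξ) :
    Filter.Tendsto (fun ξ : EuclideanSpace ℝ (Fin n) => ‖Ring.inverse (a ξ + I • (1 : A))‖)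
      (Filter.comap norm Filter.atTop) (nhds 0) := by
  obtain ⟨C, hC⟩ := exists_norm_inverse_le_div_norm_pow hcont hinv hhom
  have hnorm : Tendsto (fun ξ : EuclideanSpace ℝ (Fin n) => ‖ξ‖) (comap norm atTop) atTop :=
    tendsto_comap
  have hdecay : Tendsto (fun ξ : EuclideanSpace ℝ (Fin n) => C / ‖ξ‖ ^ m)
      (comap norm atTop) (𝓝 0) :=
    tendsto_const_nhds.div_atTop ((tendsto_pow_atTop (by omega)).comp hnorm)
  refine squeeze_zero' (.of_forall fun _ => norm_nonneg _) ?_ hdecay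
  filter_upwards [hnorm.eventually_gt_atTop 0] with ξ hξ
  have hξ0 : ξ ≠ 0 := norm_pos_iff.1 hξ
  exact ((hsa ξ hξ0).norm_inverse_add_I_smul_one_le (hinv ξ hξ0)).trans (hC ξ hξ0)
end

section
/- Let A be a unital C*-algebra, ε a self-adjoint unitary in A, and D ∈ A self-adjoint with εD = -Dε. For t ≥ 0 set 𝔻_t = [[D, tε],[tε, D]] ∈ M₂(A). Then for every f ∈ C₀(ℝ), the map t ↦ f(𝔻_t) is norm-continuous and ‖f(𝔻_t)‖ → 0 as t → ∞. -/
/-!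
Since `ε² = 1` and `ε` anticommutes with `D`, the off-diagonal terms of `𝔻_t²` cancel and
`𝔻_t² = diag(D, D)² + t² ≥ t²`, so the spectrum of the self-adjoint element `𝔻_t` lies in
`{|x| ≥ t}`. Hence `‖f(𝔻_t)‖ ≤ sup_{|x| ≥ t} |f x| → 0`. Continuity holds because `t ↦ 𝔻_t` is
affine and the continuous functional calculus is continuous in its argument.
-/

open ZeroAtInfty Filter Topology

section MatrixIdentities

variable {R A : Type*} [CommRing R] [Ring A] [Algebra R A]

theorem Matrix.fin_two_eq_diag_add_smul (D ε : A) (t : R) :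
    !![D, t • ε; t • ε, D] = !![D, 0; 0, D] + t • !![0, ε; ε, 0] := by
  ext i j; fin_cases i <;> fin_cases j <;> simp

theorem Matrix.fin_two_sq_of_anticomm {D ε : A} (hε : ε ^ 2 = 1) (hanti : ε * D = -(D * ε))
    (t : R) :
    !![D, t • ε; t • ε, D] ^ 2 = !![D, 0; 0, D] ^ 2 + algebraMap R _ (t ^ 2) := by
  rw [sq] at hε
  rw [sq, sq, Matrix.mul_fin_two, Matrix.mul_fin_two, Algebra.algebraMap_eq_smul_one]
  ext i j; fin_cases i <;> fin_cases j <;> simp [hε, hanti, smul_smul, sq, add_comm]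

end MatrixIdentities

theorem Matrix.isSelfAdjoint_fin_two {A : Type*} [AddMonoid A] [StarAddMonoid A] {a b d : A}
    (ha : IsSelfAdjoint a) (hb : IsSelfAdjoint b) (hd : IsSelfAdjoint d) :
    IsSelfAdjoint !![a, b; b, d] := by
  ext i j; fin_cases i <;> fin_cases j <;> simp [ha.star_eq, hb.star_eq, hd.star_eq]

theorem IsSelfAdjoint.le_abs_re_of_mem_spectrum {B : Type*} [CStarAlgebra B] [PartialOrder B]
    [StarOrderedRing B] {a : B} (ha : IsSelfAdjoint a) {r : ℝ} (hr : 0 ≤ r)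
    (h : algebraMap ℝ B (r ^ 2) ≤ a ^ 2) {x : ℂ} (hx : x ∈ spectrum ℂ a) : r ≤ |x.re| := by
  have hx_re : x.re ∈ spectrum ℝ a := by
    rw [← spectrum.algebraMap_mem_iff ℂ, Complex.coe_algebraMap, ← ha.mem_spectrum_eq_re hx]
    exact hx
  have hsq := (algebraMap_le_iff_le_spectrum (ha.pow 2)).mp h _
    (spectrum.pow_image_subset a 2 ⟨_, hx_re, rfl⟩)
  simpa [abs_of_nonneg hr] using sq_le_sq.mp hsq

theorem tendsto_norm_cfc_re_of_le_abs_re {ι B : Type*} [CStarAlgebra B] {l : Filter ι}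
    {a : ι → B} {r : ι → ℝ} (hr : Tendsto r l atTop)
    (hspec : ∀ᶠ i in l, ∀ x ∈ spectrum ℂ (a i), r i ≤ |x.re|) (f : C₀(ℝ, ℂ)) :
    Tendsto (fun i => ‖cfc (fun z : ℂ => f z.re) (a i)‖) l (𝓝 0) := by
  rw [Metric.tendsto_nhds]
  intro δ hδ
  obtain ⟨R, hR⟩ : ∃ R, ∀ x : ℝ, R ≤ |x| → ‖f x‖ < δ / 2 := by
    have h := (zero_at_infty f).eventually (Metric.ball_mem_nhds 0 (half_pos hδ))
    rw [← Metric.cobounded_eq_cocompact, hasBasis_cobounded_norm.eventually_iff] at h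
    simpa using h
  filter_upwards [hspec, hr.eventually_ge_atTop R] with i hi hRi
  have : ‖cfc (fun z : ℂ => f z.re) (a i)‖ ≤ δ / 2 :=
    norm_cfc_le (by positivity) fun x hx => (hR _ (hRi.trans (hi x hx))).le
  rw [dist_zero_right, norm_norm]
  linarith

theorem stmt19_general {A B : Type*} [CStarAlgebra A] [CStarAlgebra B]
    (ψ : Matrix (Fin 2) (Fin 2) A →⋆ₐ[ℂ] B)
    (ε D : A) (hε_sa : star ε = ε) (hε_sq : ε ^ 2 = 1)
    (hD : IsSelfAdjoint D) (hanti : ε * D = -(D * ε)) (f : C₀(ℝ, ℂ)) :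
    ContinuousOn (fun t : ℝ => cfc (fun z : ℂ => f z.re) (ψ !![D, t • ε; t • ε, D]))
      (Set.Ici 0) ∧
    Filter.Tendsto (fun t : ℝ => ‖cfc (fun z : ℂ => f z.re) (ψ !![D, t • ε; t • ε, D])‖)
      Filter.atTop (nhds 0) := by
  -- `B` carries no order by default; the spectral order gives meaning to `t² ≤ 𝔻_t²`.
  let := CStarAlgebra.spectralOrder B
  have := CStarAlgebra.spectralOrderedRing B
  have hsa (t : ℝ) : IsSelfAdjoint (ψ !![D, t • ε; t • ε, D]) :=
    (Matrix.isSelfAdjoint_fin_two hD ((IsSelfAdjoint.all t).smul hε_sa) hD).map ψ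
  have hcont : Continuous fun t : ℝ => ψ !![D, t • ε; t • ε, D] := by
    have hψ_smul (t : ℝ) := LinearMapClass.map_smul_of_tower (R := ℝ) ψ t !![0, ε; ε, 0]
    simp only [Matrix.fin_two_eq_diag_add_smul D ε, map_add, hψ_smul]
    fun_prop
  have hsq_ge (t : ℝ) : algebraMap ℝ B (t ^ 2) ≤ ψ !![D, t • ε; t • ε, D] ^ 2 := by
    have hψ_alg : ψ (algebraMap ℝ _ (t ^ 2)) = algebraMap ℝ B (t ^ 2) :=
      ((ψ : Matrix (Fin 2) (Fin 2) A →ₐ[ℂ] B).restrictScalars ℝ).commutes _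
    rw [← map_pow ψ, Matrix.fin_two_sq_of_anticomm hε_sq hanti, map_add, map_pow ψ, hψ_alg]
    exact le_add_of_nonneg_left ((Matrix.isSelfAdjoint_fin_two hD (.zero A) hD).map ψ).sq_nonneg
  refine ⟨(hcont.cfc_of_mem_nhdsSet _ univ_mem (fun t => (hsa t).isStarNormal)).continuousOn,
    tendsto_norm_cfc_re_of_le_abs_re tendsto_id ?_ f⟩
  filter_upwards [eventually_ge_atTop 0] with t ht x hx
  exact (hsa t).le_abs_re_of_mem_spectrum ht (hsq_ge t) hx

/-- Let `ε` be a self-adjoint unitary and `D` a self-adjoint element of a unital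
C*-algebra `A` with `εD = -Dε`, and for `t ≥ 0` let `𝔻_t = [[D, tε], [tε, D]] ∈ M₂(A)`
(realized in a C*-algebra `B` via an injective unital `*`-homomorphism
`ψ : M₂(A) → B`, which endows `M₂(A)` with its C*-norm). Then for every `f ∈ C₀(ℝ)`
the map `t ↦ f(𝔻_t)` is norm-continuous and `‖f(𝔻_t)‖ → 0` as `t → ∞`. -/
theorem stmt19 {A B : Type*} [CStarAlgebra A] [CStarAlgebra B]
    (ψ : Matrix (Fin 2) (Fin 2) A →⋆ₐ[ℂ] B) (hψ : Function.Injective ψ)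
    (ε D : A) (hε_sa : star ε = ε) (hε_sq : ε ^ 2 = 1)
    (hD : IsSelfAdjoint D) (hanti : ε * D = -(D * ε)) (f : C₀(ℝ, ℂ)) :
    ContinuousOn (fun t : ℝ => cfc (fun z : ℂ => f z.re) (ψ !![D, t • ε; t • ε, D]))
      (Set.Ici 0) ∧
    Filter.Tendsto (fun t : ℝ => ‖cfc (fun z : ℂ => f z.re) (ψ !![D, t • ε; t • ε, D])‖)
      Filter.atTop (nhds 0) :=
  stmt19_general ψ ε D hε_sa hε_sq hD hanti f
end
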